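/- arXiv:math/0507195 — 3 statements merged into one kernel-verified Lean document; each statement's English description precedes it below -/
import Mathlib

section
/- In the universal enveloping algebra U(V) of the Virasoro algebra, there is an identity e_{-1}³ (e_1³ - 6 e_2 e_1 + 6 e_3) ≡ 48 e_0³ - 144 e_0² + 96 e_0 modulo the left ideal U(V) e_{-1}. -/
/-- In the universal enveloping algebra `U(V)` of the Virasoro algebra,
`e₋₁³ (e₁³ - 6 e₂ e₁ + 6 e₃) ≡ 48 e₀³ - 144 e₀² + 96 e₀` modulo the left
ideal `U(V) e₋₁`. -/
theorem virasoro_ue_congruence_mod_left_ideal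
    {k : Type*} [Field k] [CharZero k]
    {L : Type*} [LieRing L] [LieAlgebra k L]
    (E : ℤ → L) (C : L)
    (hC : ∀ x : L, ⁅C, x⁆ = 0)
    (hE : ∀ i j : ℤ, ⁅E i, E j⁆ =
      (j - i) • E (i + j) + (if i + j = 0 then ((i : k) ^ 3 - (i : k)) / 12 else 0) • C) :
    letI e : ℤ → UniversalEnvelopingAlgebra k L := fun i => UniversalEnvelopingAlgebra.ι k (E i)
    (e (-1)) ^ 3 * ((e 1) ^ 3 - 6 * e 2 * e 1 + 6 * e 3)
      - (48 * (e 0) ^ 3 - 144 * (e 0) ^ 2 + 96 * e 0)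
      ∈ Ideal.span {e (-1)} := by
  beta_reduce
  set e : ℤ → UniversalEnvelopingAlgebra k L := fun i => UniversalEnvelopingAlgebra.ι k (E i)
    with he
  have H : ∀ i j : ℤ, e i * e j = e j * e i + UniversalEnvelopingAlgebra.ι k
      ((j - i) • E (i + j) + (if i + j = 0 then ((i : k) ^ 3 - (i : k)) / 12 else 0) • C) := by
    intro i j
    letI : LieRing (UniversalEnvelopingAlgebra k L) := LieRing.ofAssociativeRing
    rw [← hE, LieHom.map_lie, Ring.lie_def]
    abel
  have key : ∀ i j : ℤ, ∀ x : L,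
      ((j - i) • E (i + j) + (if i + j = 0 then ((i : k) ^ 3 - (i : k)) / 12 else 0) • C = x) →
      e i * e j = e j * e i + UniversalEnvelopingAlgebra.ι k x := by
    intro i j x hx; rw [H i j, hx]
  -- the five commutation rules we need (no central terms survive)
  have h10 : e (-1) * e 0 = e 0 * e (-1) + (1 : k) • e (-1) := by
    have h := key (-1) 0 ((1 : k) • E (-1)) (by norm_num [← Int.cast_smul_eq_zsmul k])
    rw [map_smul] at h; exact h
  have h11 : e (-1) * e 1 = e 1 * e (-1) + (2 : k) • e 0 := by
    have h := key (-1) 1 ((2 : k) • E 0) (by norm_num [← Int.cast_smul_eq_zsmul k])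
    rw [map_smul] at h; exact h
  have h12 : e (-1) * e 2 = e 2 * e (-1) + (3 : k) • e 1 := by
    have h := key (-1) 2 ((3 : k) • E 1) (by norm_num [← Int.cast_smul_eq_zsmul k])
    rw [map_smul] at h; exact h
  have h13 : e (-1) * e 3 = e 3 * e (-1) + (4 : k) • e 2 := by
    have h := key (-1) 3 ((4 : k) • E 2) (by norm_num [← Int.cast_smul_eq_zsmul k])
    rw [map_smul] at h; exact h
  have h01 : e 0 * e 1 = e 1 * e 0 + (1 : k) • e 1 := by
    have h := key 0 1 ((1 : k) • E 1) (by norm_num [← Int.cast_smul_eq_zsmul k])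
    rw [map_smul] at h; exact h
  -- the same rules with a continuation on the right
  have h10' : ∀ w, e (-1) * (e 0 * w) = e 0 * (e (-1) * w) + (1 : k) • (e (-1) * w) := by
    intro w; rw [← mul_assoc, h10, add_mul, smul_mul_assoc, mul_assoc]
  have h11' : ∀ w, e (-1) * (e 1 * w) = e 1 * (e (-1) * w) + (2 : k) • (e 0 * w) := by
    intro w; rw [← mul_assoc, h11, add_mul, smul_mul_assoc, mul_assoc]
  have h12' : ∀ w, e (-1) * (e 2 * w) = e 2 * (e (-1) * w) + (3 : k) • (e 1 * w) := by
    intro w; rw [← mul_assoc, h12, add_mul, smul_mul_assoc, mul_assoc]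
  have h13' : ∀ w, e (-1) * (e 3 * w) = e 3 * (e (-1) * w) + (4 : k) • (e 2 * w) := by
    intro w; rw [← mul_assoc, h13, add_mul, smul_mul_assoc, mul_assoc]
  have h01' : ∀ w, e 0 * (e 1 * w) = e 1 * (e 0 * w) + (1 : k) • (e 1 * w) := by
    intro w; rw [← mul_assoc, h01, add_mul, smul_mul_assoc, mul_assoc]
  -- explicit cofactor
  refine Submodule.mem_span_singleton.mpr
    ⟨(e 1 * (e 1 * (e 1 * (e (-1) * e (-1)))))
      + (18 : k) • (e 1 * (e 1 * (e 0 * e (-1))))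
      - (18 : k) • (e 1 * (e 1 * e (-1)))
      + (72 : k) • (e 1 * (e 0 * e 0))
      - (144 : k) • (e 1 * e 0)
      + (72 : k) • e 1
      - (6 : k) • (e 2 * (e 1 * (e (-1) * e (-1))))
      - (36 : k) • (e 2 * (e 0 * e (-1)))
      + (36 : k) • (e 2 * e (-1))
      + (6 : k) • (e 3 * (e (-1) * e (-1))), ?_⟩
  rw [smul_eq_mul]
  have hee : UniversalEnvelopingAlgebra.ι k (E (-1)) = e (-1) := rfl
  have hee1 : UniversalEnvelopingAlgebra.ι k (E 1) = e 1 := rfl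
  simp only [hee, hee1]
  have t1 : (48 : UniversalEnvelopingAlgebra k L) * (e 0) ^ 3 = (48 : k) • (e 0) ^ 3 := by
    rw [Algebra.smul_def, map_ofNat]
  have t2 : (144 : UniversalEnvelopingAlgebra k L) * (e 0) ^ 2 = (144 : k) • (e 0) ^ 2 := by
    rw [Algebra.smul_def, map_ofNat]
  have t3 : (96 : UniversalEnvelopingAlgebra k L) * e 0 = (96 : k) • e 0 := by
    rw [Algebra.smul_def, map_ofNat]
  have t4 : (6 : UniversalEnvelopingAlgebra k L) * e 2 * e 1 = (6 : k) • (e 2 * e 1) := by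
    rw [mul_assoc, Algebra.smul_def, map_ofNat]
  have t5 : (6 : UniversalEnvelopingAlgebra k L) * e 3 = (6 : k) • e 3 := by
    rw [Algebra.smul_def, map_ofNat]
  rw [t1, t2, t3, t4, t5]
  simp only [pow_succ, pow_zero, one_mul]
  simp only [mul_add, add_mul, mul_sub, sub_mul, smul_mul_assoc, mul_smul_comm, mul_assoc,
    smul_add, smul_sub, smul_smul, h10, h10', h11, h11', h12, h12', h13, h13', h01, h01']
  module
end

section
/- Let M be a module over the Virasoro algebra, and let w ∈ M satisfy e_{-1} w = 0, e_0 w = (μ+1) w for some scalar μ, and (e_1³ - 6 e_2 e_1 + 6 e_3) w = 0. If w ≠ 0, then μ ∈ {-1, 0, 1}. -/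
/-! The brackets among `e₋₁, e₀, e₁` carry no central term, so `w` is a lowest-weight vector of
weight `a = μ + 1` for this copy of `sl₂` and `e₋₁ e₁ⁿ⁺¹ w = (n+1)(2a+n) e₁ⁿ w`. Hence `e₋₁` sends
`(e₁³ - 6e₂e₁ + 6e₃)w` to `6(a-2)(e₁² - 2e₂)w`, that to `24(a-1)(a-2) e₁w`, and that to
`48a(a-1)(a-2)w`. As the first vector is zero and `w ≠ 0`, `a ∈ {0, 1, 2}`. -/

open LieModule

section Lowering

variable {k L M : Type*} [CommRing k] [LieRing L] [LieAlgebra k L]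
  [AddCommGroup M] [Module k M] [LieRingModule L M] [LieModule k L M]
  {f h e : L} {m : M} {a : k}

theorem lie_pow_toEnd_eq_smul (hhe : ⁅h, e⁆ = e) (hhm : ⁅h, m⁆ = a • m) (n : ℕ) :
    ⁅h, (toEnd k L M e ^ n) m⁆ = (a + n) • (toEnd k L M e ^ n) m := by
  induction n with
  | zero => simpa using hhm
  | succ n ih =>
    rw [pow_succ', Module.End.mul_apply, toEnd_apply_apply, leibniz_lie, hhe, ih, lie_smul]
    push_cast
    module

-- `IsSl2Triple.HasPrimitiveVectorWith.lie_e_pow_succ_toEnd_f` in the normalisation `e₋₁, e₀, e₁`.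
theorem lie_pow_succ_toEnd_eq_smul (hfe : ⁅f, e⁆ = (2 : k) • h) (hhe : ⁅h, e⁆ = e)
    (hfm : ⁅f, m⁆ = 0) (hhm : ⁅h, m⁆ = a • m) (n : ℕ) :
    ⁅f, (toEnd k L M e ^ (n + 1)) m⁆ = ((n + 1) * (2 * a + n)) • (toEnd k L M e ^ n) m := by
  induction n with
  | zero => simp [leibniz_lie f e m, hfe, hfm, hhm, smul_smul]
  | succ n ih =>
    rw [pow_succ' _ (n + 1), Module.End.mul_apply, toEnd_apply_apply, leibniz_lie, hfe,
      smul_lie, lie_pow_toEnd_eq_smul hhe hhm, ih, lie_smul, ← toEnd_apply_apply (R := k),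
      ← Module.End.mul_apply, ← pow_succ']
    push_cast
    module

end Lowering

def VirasoroRelations (k : Type*) [Field k] {L : Type*} [LieRing L] [LieAlgebra k L]
    (E : ℤ → L) (C : L) : Prop :=
  ∀ i j : ℤ, ⁅E i, E j⁆ =
    (j - i) • E (i + j) + (if i + j = 0 then ((i : k) ^ 3 - (i : k)) / 12 else 0) • C

namespace VirasoroRelations

variable {k L M : Type*} [Field k] [LieRing L] [LieAlgebra k L]
  [AddCommGroup M] [Module k M] [LieRingModule L M] [LieModule k L M]
  {E : ℤ → L} {C : L} {w : M} {a : k}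

theorem lie_eq_smul (hE : VirasoroRelations k E C) {i : ℤ} (hi : i ^ 3 = i) (j : ℤ) :
    ⁅E i, E j⁆ = ((j - i : ℤ) : k) • E (i + j) := by
  rw [hE i j, ← Int.cast_pow, hi, sub_self, zero_div, ite_self, zero_smul, add_zero,
    Int.cast_smul_eq_zsmul]

theorem lie_E_neg_one_lie_E_one_pow (hE : VirasoroRelations k E C) (h1 : ⁅E (-1), w⁆ = 0)
    (h0 : ⁅E 0, w⁆ = a • w) (n : ℕ) :
    ⁅E (-1), (toEnd k L M (E 1) ^ (n + 1)) w⁆ =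
      ((n + 1) * (2 * a + n)) • (toEnd k L M (E 1) ^ n) w := by
  refine lie_pow_succ_toEnd_eq_smul ?_ ?_ h1 h0 n
  · simpa using hE.lie_eq_smul (i := -1) (by norm_num) 1
  · simpa using hE.lie_eq_smul (i := 0) (by norm_num) 1

theorem lie_E_neg_one_lie_E_one (hE : VirasoroRelations k E C) (h1 : ⁅E (-1), w⁆ = 0)
    (h0 : ⁅E 0, w⁆ = a • w) : ⁅E (-1), ⁅E 1, w⁆⁆ = (2 * a) • w := by
  simpa using hE.lie_E_neg_one_lie_E_one_pow h1 h0 0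

theorem lie_E_neg_one_quadratic (hE : VirasoroRelations k E C) (h1 : ⁅E (-1), w⁆ = 0)
    (h0 : ⁅E 0, w⁆ = a • w) :
    ⁅E (-1), ⁅E 1, ⁅E 1, w⁆⁆ - (2 : k) • ⁅E 2, w⁆⁆ = (4 * (a - 1)) • ⁅E 1, w⁆ := by
  have h2 : ⁅E (-1), E 2⁆ = (3 : k) • E 1 := by
    simpa using hE.lie_eq_smul (i := -1) (by norm_num) 2
  have hw2 := hE.lie_E_neg_one_lie_E_one_pow h1 h0 1
  simp only [pow_succ, pow_zero, one_mul, Module.End.mul_apply, toEnd_apply_apply] at hw2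
  rw [lie_sub, lie_smul, hw2, leibniz_lie, h2, h1, lie_zero, add_zero, smul_lie]
  push_cast
  module

theorem lie_E_neg_one_cubic (hE : VirasoroRelations k E C) (h1 : ⁅E (-1), w⁆ = 0)
    (h0 : ⁅E 0, w⁆ = a • w) :
    ⁅E (-1), ⁅E 1, ⁅E 1, ⁅E 1, w⁆⁆⁆ - (6 : ℤ) • ⁅E 2, ⁅E 1, w⁆⁆ + (6 : ℤ) • ⁅E 3, w⁆⁆ =
      (6 * (a - 2)) • (⁅E 1, ⁅E 1, w⁆⁆ - (2 : k) • ⁅E 2, w⁆) := by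
  have h2 : ⁅E (-1), E 2⁆ = (3 : k) • E 1 := by
    simpa using hE.lie_eq_smul (i := -1) (by norm_num) 2
  have h3 : ⁅E (-1), E 3⁆ = (4 : k) • E 2 := by
    simpa using hE.lie_eq_smul (i := -1) (by norm_num) 3
  have hw3 := hE.lie_E_neg_one_lie_E_one_pow h1 h0 2
  simp only [pow_succ, pow_zero, one_mul, Module.End.mul_apply, toEnd_apply_apply] at hw3
  rw [lie_add, lie_sub, lie_zsmul, lie_zsmul, hw3, leibniz_lie (E (-1)) (E 2), h2,
    hE.lie_E_neg_one_lie_E_one h1 h0, leibniz_lie (E (-1)) (E 3), h3, h1, lie_zero, add_zero,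
    smul_lie, smul_lie, lie_smul]
  push_cast
  module

theorem lie_E_neg_one_iterate_three_cubic (hE : VirasoroRelations k E C)
    (h1 : ⁅E (-1), w⁆ = 0) (h0 : ⁅E 0, w⁆ = a • w) :
    ⁅E (-1), ⁅E (-1), ⁅E (-1),
      ⁅E 1, ⁅E 1, ⁅E 1, w⁆⁆⁆ - (6 : ℤ) • ⁅E 2, ⁅E 1, w⁆⁆ + (6 : ℤ) • ⁅E 3, w⁆⁆⁆⁆ =
      (48 * (a * (a - 1) * (a - 2))) • w := by
  rw [hE.lie_E_neg_one_cubic h1 h0, lie_smul, lie_smul, hE.lie_E_neg_one_quadratic h1 h0,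
    lie_smul, hE.lie_E_neg_one_lie_E_one h1 h0, smul_smul, smul_smul]
  congr 1
  ring

end VirasoroRelations

theorem virasoro_weight_in_three_values_general
    {k : Type*} [Field k] [CharZero k]
    {L : Type*} [LieRing L] [LieAlgebra k L]
    (E : ℤ → L) (C : L)
    (hE : ∀ i j : ℤ, ⁅E i, E j⁆ =
      (j - i) • E (i + j) + (if i + j = 0 then ((i : k) ^ 3 - (i : k)) / 12 else 0) • C)
    {M : Type*} [AddCommGroup M] [Module k M] [LieRingModule L M] [LieModule k L M]
    (μ : k) (w : M) (hw : w ≠ 0)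
    (h1 : ⁅E (-1), w⁆ = 0)
    (h0 : ⁅E 0, w⁆ = (μ + 1) • w)
    (hann : ⁅E 1, ⁅E 1, ⁅E 1, w⁆⁆⁆ - (6 : ℤ) • ⁅E 2, ⁅E 1, w⁆⁆ + (6 : ℤ) • ⁅E 3, w⁆ = 0) :
    μ ∈ ({-1, 0, 1} : Set k) := by
  have hE : VirasoroRelations k E C := hE
  have hkill := hE.lie_E_neg_one_iterate_three_cubic h1 h0
  rw [hann, lie_zero, lie_zero, lie_zero, eq_comm, smul_eq_zero] at hkill
  have hcubic : (μ + 1) * μ * (μ - 1) = 0 := by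
    have h48 : (48 : k) ≠ 0 := by norm_num
    linear_combination (mul_eq_zero.mp (hkill.resolve_right hw)).resolve_left h48
  simp only [mul_eq_zero, add_eq_zero_iff_eq_neg, sub_eq_zero] at hcubic
  simp only [Set.mem_insert_iff, Set.mem_singleton_iff]
  tauto

/-- Let `M` be a module over the Virasoro algebra and `w ∈ M` nonzero with
`e₋₁ w = 0`, `e₀ w = (μ+1) w` and `(e₁³ - 6 e₂ e₁ + 6 e₃) w = 0`.
Then `μ ∈ {-1, 0, 1}`. -/
theorem virasoro_weight_in_three_values
    {k : Type*} [Field k] [CharZero k]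
    {L : Type*} [LieRing L] [LieAlgebra k L]
    (E : ℤ → L) (C : L)
    (hC : ∀ x : L, ⁅C, x⁆ = 0)
    (hE : ∀ i j : ℤ, ⁅E i, E j⁆ =
      (j - i) • E (i + j) + (if i + j = 0 then ((i : k) ^ 3 - (i : k)) / 12 else 0) • C)
    {M : Type*} [AddCommGroup M] [Module k M] [LieRingModule L M] [LieModule k L M]
    (μ : k) (w : M) (hw : w ≠ 0)
    (h1 : ⁅E (-1), w⁆ = 0)
    (h0 : ⁅E 0, w⁆ = (μ + 1) • w)
    (hann : ⁅E 1, ⁅E 1, ⁅E 1, w⁆⁆⁆ - (6 : ℤ) • ⁅E 2, ⁅E 1, w⁆⁆ + (6 : ℤ) • ⁅E 3, w⁆ = 0) :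
    μ ∈ ({-1, 0, 1} : Set k) :=
  virasoro_weight_in_three_values_general E C hE μ w hw h1 h0 hann
end

section
/- Let M be a weight module over the Virasoro algebra with all weight spaces M_λ = {m ∈ M : e_0 m = λ m}, and suppose there exist x ∈ M_{-1}, y ∈ M_1 and a nonzero scalar τ with e_1 x = 0, e_{-1} y = 0, x = e_{-2} y, e_2 x = τ y. Let U_+ and U_- be the unital subalgebras of U(V) generated by {e_1, e_2} and {e_{-1}, e_{-2}} respectively. Then the subspace N = U_- x + U_+ y of M is invariant under the action of e_1. -/
/-- Let `M` be a weight module over the Virasoro algebra (on which `c` acts by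
a scalar `κ`), and suppose `x ∈ M₋₁`, `y ∈ M₁` and `τ ≠ 0` satisfy
`e₁ x = 0`, `e₋₁ y = 0`, `x = e₋₂ y`, `e₂ x = τ y`.  Let `U₊`, `U₋` be the
unital subalgebras of `U(V)` generated by `{e₁, e₂}` and `{e₋₁, e₋₂}`.  Then
the subspace `N = U₋ x + U₊ y` of `M` is invariant under the action of `e₁`. -/
theorem virasoro_N_invariant_under_e1
    {k : Type*} [Field k] [CharZero k]
    {L : Type*} [LieRing L] [LieAlgebra k L]
    (E : ℤ → L) (C : L)
    (hC : ∀ z : L, ⁅C, z⁆ = 0)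
    (hE : ∀ i j : ℤ, ⁅E i, E j⁆ =
      (j - i) • E (i + j) + (if i + j = 0 then ((i : k) ^ 3 - (i : k)) / 12 else 0) • C)
    {M : Type*} [AddCommGroup M] [Module k M] [LieRingModule L M] [LieModule k L M]
    (hweight : (⨆ μ : k, Module.End.eigenspace (LieModule.toEnd k L M (E 0)) μ) = ⊤)
    (κ : k) (hc : ∀ m : M, ⁅C, m⁆ = κ • m)
    (x y : M) (τ : k) (hτ : τ ≠ 0)
    (hx : ⁅E 0, x⁆ = (-1 : k) • x) (hy : ⁅E 0, y⁆ = (1 : k) • y)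
    (h1x : ⁅E 1, x⁆ = 0) (hm1y : ⁅E (-1), y⁆ = 0)
    (hxy : x = ⁅E (-2), y⁆) (h2x : ⁅E 2, x⁆ = τ • y) :
    letI ρ : UniversalEnvelopingAlgebra k L →ₐ[k] Module.End k M :=
      UniversalEnvelopingAlgebra.lift k (LieModule.toEnd k L M)
    letI Uminus : Subalgebra k (UniversalEnvelopingAlgebra k L) :=
      Algebra.adjoin k {UniversalEnvelopingAlgebra.ι k (E (-1)),
        UniversalEnvelopingAlgebra.ι k (E (-2))}
    letI Uplus : Subalgebra k (UniversalEnvelopingAlgebra k L) :=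
      Algebra.adjoin k {UniversalEnvelopingAlgebra.ι k (E 1),
        UniversalEnvelopingAlgebra.ι k (E 2)}
    letI N : Submodule k M := Submodule.span k
      ((fun a => ρ a x) '' (Uminus : Set (UniversalEnvelopingAlgebra k L)) ∪
       (fun a => ρ a y) '' (Uplus : Set (UniversalEnvelopingAlgebra k L)))
    ∀ m ∈ N, ⁅E 1, m⁆ ∈ N := by
  set ρ : UniversalEnvelopingAlgebra k L →ₐ[k] Module.End k M :=
    UniversalEnvelopingAlgebra.lift k (LieModule.toEnd k L M) with hρdef
  set Uminus : Subalgebra k (UniversalEnvelopingAlgebra k L) :=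
    Algebra.adjoin k {UniversalEnvelopingAlgebra.ι k (E (-1)),
      UniversalEnvelopingAlgebra.ι k (E (-2))} with hUm
  set Uplus : Subalgebra k (UniversalEnvelopingAlgebra k L) :=
    Algebra.adjoin k {UniversalEnvelopingAlgebra.ι k (E 1),
      UniversalEnvelopingAlgebra.ι k (E 2)} with hUp
  set N : Submodule k M := Submodule.span k
    ((fun a => ρ a x) '' (Uminus : Set (UniversalEnvelopingAlgebra k L)) ∪
     (fun a => ρ a y) '' (Uplus : Set (UniversalEnvelopingAlgebra k L))) with hN
  set e : ℤ → UniversalEnvelopingAlgebra k L :=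
    fun i => UniversalEnvelopingAlgebra.ι k (E i) with he
  -- commutator rule in the enveloping algebra
  have hcomm : ∀ z w : L, UniversalEnvelopingAlgebra.ι k z * UniversalEnvelopingAlgebra.ι k w
      = UniversalEnvelopingAlgebra.ι k w * UniversalEnvelopingAlgebra.ι k z
        + UniversalEnvelopingAlgebra.ι k ⁅z, w⁆ := by
    intro z w
    letI : LieRing (UniversalEnvelopingAlgebra k L) := LieRing.ofAssociativeRing
    have h := LieHom.map_lie (UniversalEnvelopingAlgebra.ι k (L := L)) z w
    rw [Ring.lie_def] at h
    rw [h]; abel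
  have hιz : ∀ (n : ℤ) (z : L), UniversalEnvelopingAlgebra.ι k (n • z)
      = n • UniversalEnvelopingAlgebra.ι k z := by
    intro n z
    exact map_zsmul ((UniversalEnvelopingAlgebra.ι k (L := L)) :
      L →ₗ[k] UniversalEnvelopingAlgebra k L) n z
  -- evaluation of ι through ρ
  have hρι : ∀ (z : L) (m : M), ρ (UniversalEnvelopingAlgebra.ι k z) m = ⁅z, m⁆ := by
    intro z m
    rw [show ρ (UniversalEnvelopingAlgebra.ι k z)
        = UniversalEnvelopingAlgebra.lift k (LieModule.toEnd k L M)
            (UniversalEnvelopingAlgebra.ι k z) from rfl,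
      UniversalEnvelopingAlgebra.lift_ι_apply]
    simp [LieModule.toEnd_apply_apply]
  have hρmul : ∀ (a b : UniversalEnvelopingAlgebra k L) (m : M),
      ρ (a * b) m = ρ a (ρ b m) := by
    intro a b m; rw [map_mul]; rfl
  -- generators of Uminus
  have hg1 : e (-1) ∈ Uminus := Algebra.subset_adjoin (Set.mem_insert _ _)
  have hg2 : e (-2) ∈ Uminus := Algebra.subset_adjoin (Set.mem_insert_of_mem _ rfl)
  -- (1) [e 0, Uminus] ⊆ Uminus
  have h0 : ∀ a ∈ Uminus, e 0 * a - a * e 0 ∈ Uminus := by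
    intro a ha
    rw [hUm] at ha
    induction ha using Algebra.adjoin_induction with
    | mem z hz =>
      rcases hz with hz | hz
      · subst hz
        have hl : ⁅E 0, E (-1)⁆ = (-1 : ℤ) • E (-1) := by rw [hE]; norm_num
        have h2 : e 0 * e (-1) = e (-1) * e 0 + (-1 : ℤ) • e (-1) := by
          rw [hcomm (E 0) (E (-1)), hl, hιz]
        show e 0 * e (-1) - e (-1) * e 0 ∈ Uminus
        rw [h2]
        have h3 : e (-1) * e 0 + (-1 : ℤ) • e (-1) - e (-1) * e 0
            = (-1 : ℤ) • e (-1) := by abel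
        rw [h3]
        exact Uminus.zsmul_mem hg1 (-1)
      · rw [Set.mem_singleton_iff] at hz; subst hz
        have hl : ⁅E 0, E (-2)⁆ = (-2 : ℤ) • E (-2) := by rw [hE]; norm_num
        have h2 : e 0 * e (-2) = e (-2) * e 0 + (-2 : ℤ) • e (-2) := by
          rw [hcomm (E 0) (E (-2)), hl, hιz]
        show e 0 * e (-2) - e (-2) * e 0 ∈ Uminus
        rw [h2]
        have h3 : e (-2) * e 0 + (-2 : ℤ) • e (-2) - e (-2) * e 0
            = (-2 : ℤ) • e (-2) := by abel
        rw [h3]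
        exact Uminus.zsmul_mem hg2 (-2)
    | algebraMap r =>
      rw [Algebra.commutes]
      simpa using Uminus.zero_mem
    | add u v hu hv ihu ihv =>
      have : e 0 * (u + v) - (u + v) * e 0
          = (e 0 * u - u * e 0) + (e 0 * v - v * e 0) := by noncomm_ring
      rw [this]; exact add_mem ihu ihv
    | mul u v hu hv ihu ihv =>
      have : e 0 * (u * v) - (u * v) * e 0
          = (e 0 * u - u * e 0) * v + u * (e 0 * v - v * e 0) := by noncomm_ring
      rw [this]; exact add_mem (mul_mem ihu hv) (mul_mem hu ihv)
  -- (2) [e 1, Uminus] ⊆ Uminus + Uminus * e 0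
  have h1 : ∀ a ∈ Uminus, ∃ b b', b ∈ Uminus ∧ b' ∈ Uminus ∧
      e 1 * a - a * e 1 = b + b' * e 0 := by
    intro a ha
    rw [hUm] at ha
    induction ha using Algebra.adjoin_induction with
    | mem z hz =>
      rcases hz with hz | hz
      · subst hz
        refine ⟨0, (-2 : ℤ) • 1, Uminus.zero_mem, Uminus.zsmul_mem Uminus.one_mem (-2), ?_⟩
        have hl : ⁅E 1, E (-1)⁆ = (-2 : ℤ) • E 0 := by rw [hE]; norm_num
        have h2 : e 1 * e (-1) = e (-1) * e 1 + (-2 : ℤ) • e 0 := by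
          rw [hcomm (E 1) (E (-1)), hl, hιz]
        show e 1 * e (-1) - e (-1) * e 1 = 0 + ((-2 : ℤ) • 1) * e 0
        rw [h2, zero_add, smul_mul_assoc, one_mul]
        abel
      · rw [Set.mem_singleton_iff] at hz; subst hz
        refine ⟨(-3 : ℤ) • e (-1), 0, Uminus.zsmul_mem hg1 (-3), Uminus.zero_mem, ?_⟩
        have hl : ⁅E 1, E (-2)⁆ = (-3 : ℤ) • E (-1) := by rw [hE]; norm_num
        have h2 : e 1 * e (-2) = e (-2) * e 1 + (-3 : ℤ) • e (-1) := by
          rw [hcomm (E 1) (E (-2)), hl, hιz]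
        show e 1 * e (-2) - e (-2) * e 1 = (-3 : ℤ) • e (-1) + 0 * e 0
        rw [h2, zero_mul, add_zero]
        abel
    | algebraMap r =>
      exact ⟨0, 0, Uminus.zero_mem, Uminus.zero_mem, by rw [Algebra.commutes]; simp⟩
    | add u v hu hv ihu ihv =>
      obtain ⟨b1, b1', hb1, hb1', he1⟩ := ihu
      obtain ⟨b2, b2', hb2, hb2', he2⟩ := ihv
      refine ⟨b1 + b2, b1' + b2', add_mem hb1 hb2, add_mem hb1' hb2', ?_⟩
      have : e 1 * (u + v) - (u + v) * e 1
          = (e 1 * u - u * e 1) + (e 1 * v - v * e 1) := by noncomm_ring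
      rw [this, he1, he2]; noncomm_ring
    | mul u v hu hv ihu ihv =>
      obtain ⟨b1, b1', hb1, hb1', he1⟩ := ihu
      obtain ⟨b2, b2', hb2, hb2', he2⟩ := ihv
      have hd : e 0 * v = v * e 0 + (e 0 * v - v * e 0) := by noncomm_ring
      refine ⟨b1 * v + b1' * (e 0 * v - v * e 0) + u * b2,
        b1' * v + u * b2',
        add_mem (add_mem (mul_mem hb1 hv) (mul_mem hb1' (h0 v hv))) (mul_mem hu hb2),
        add_mem (mul_mem hb1' hv) (mul_mem hu hb2'), ?_⟩
      have key : e 1 * (u * v) - (u * v) * e 1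
          = (e 1 * u - u * e 1) * v + u * (e 1 * v - v * e 1) := by noncomm_ring
      rw [key, he1, he2]
      have : (b1 + b1' * e 0) * v = b1 * v + b1' * (e 0 * v) := by noncomm_ring
      rw [this, hd]
      noncomm_ring
  -- membership of generator images in N
  have hNx : ∀ a ∈ Uminus, ρ a x ∈ N :=
    fun a ha => Submodule.subset_span (Set.mem_union_left _ ⟨a, ha, rfl⟩)
  have hNy : ∀ a ∈ Uplus, ρ a y ∈ N :=
    fun a ha => Submodule.subset_span (Set.mem_union_right _ ⟨a, ha, rfl⟩)
  have hgp1 : e 1 ∈ Uplus := Algebra.subset_adjoin (Set.mem_insert _ _)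
  -- main
  intro m hm
  induction hm using Submodule.span_induction with
  | mem z hz =>
    rcases hz with ⟨a, ha, rfl⟩ | ⟨a, ha, rfl⟩
    · -- z = ρ a x, a ∈ Uminus
      obtain ⟨b, b', hb, hb', heq⟩ := h1 a ha
      have hsplit : e 1 * a = a * e 1 + (b + b' * e 0) := by rw [← heq]; noncomm_ring
      have : ⁅E 1, ρ a x⁆ = ρ (e 1 * a) x := by
        rw [hρmul, hρι]
      rw [this, hsplit, map_add, map_add, map_mul, map_mul]
      have hx1 : ρ (e 1) x = 0 := by rw [hρι]; exact h1x
      have hx0 : ρ (e 0) x = (-1 : k) • x := by rw [hρι]; exact hx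
      simp only [LinearMap.add_apply, Module.End.mul_apply, hx1, map_zero, hx0, map_smul]
      rw [zero_add]
      exact add_mem (hNx b hb) (Submodule.smul_mem _ _ (hNx b' hb'))
    · -- z = ρ a y, a ∈ Uplus
      have : ⁅E 1, ρ a y⁆ = ρ (e 1 * a) y := by rw [hρmul, hρι]
      rw [this]
      exact hNy _ (mul_mem hgp1 ha)
  | zero => simpa using N.zero_mem
  | add u v hu hv ihu ihv => rw [lie_add]; exact add_mem ihu ihv
  | smul c u hu ihu => rw [lie_smul]; exact Submodule.smul_mem _ _ ihu
end
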